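/- Let S_m be the set of states z = (q, z^d, z^c, z^u), where q is a finite list over {1,…,n} and z^d, z^c, z^u ∈ ℕ^n, with length(q) + Σ_{i=1}^n (z^d_i + z^c_i + z^u_i) = m. Define the unnormalized weight ζ̄(z) = ∏_{i=1}^n (p_i/μ^{CS})^{count_i(q)} (p_i/μ^c_i)^{z^c_i} (1/z^d_i!)(p_i/μ^d_i)^{z^d_i} (1/z^u_i!)(p_i/μ^u_i)^{z^u_i}, where count_i(q) is the number of occurrences of i in q. Define transition rates r on S_m: for i, j ∈ {1,…,n}, r(z, z − e^d_i + e^c_i) = μ^d_i z^d_i; r(z, z − e^c_i + e^u_i) = μ^c_i if z^c_i > 0 and 0 otherwise; r(z, z^{+i} − e^u_i) = μ^u_i z^u_i, where z^{+i} appends i at the end of q; r(z, z_{−i} + e^d_j) = μ^{CS} p_j if q is nonempty with head equal to i (z_{−i} removes the head of q), and 0 otherwise; all other rates to states different from z are 0. Then ζ̄ satisfies the global balance equations: for every z ∈ S_m, Σ_{y ∈ S_m} ζ̄(y) r(y, z) = ζ̄(z) Σ_{y ∈ S_m} r(z, y). -/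

import Mathlib

open scoped BigOperators

/-- A sequence-level state: an ordered FIFO queue `q` of task classes at the central
server together with the vectors `d`, `c`, `u` counting tasks at each client's
downlink, computation, and uplink servers. -/
structure StSeq (n : ℕ) where
  q : List (Fin n)
  d : Fin n → ℕ
  c : Fin n → ℕ
  u : Fin n → ℕ
deriving DecidableEq

namespace StSeq

variable {n : ℕ}

/-- Total number of tasks in a sequence-level state. -/
def totalSeq (z : StSeq n) : ℕ := z.q.length + ∑ i, (z.d i + z.c i + z.u i)

/-- Unnormalized sequence-level weight `ζ̄(z)`. -/
noncomputable def zbar (p μc μd μu : Fin n → ℝ) (μCS : ℝ) (z : StSeq n) : ℝ :=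
  ∏ i,
    (p i / μCS) ^ (z.q.count i) * (p i / μc i) ^ z.c i *
      ((p i / μd i) ^ z.d i / (Nat.factorial (z.d i) : ℝ)) *
      ((p i / μu i) ^ z.u i / (Nat.factorial (z.u i) : ℝ))

/-- Jump `z - e^d_i + e^c_i` (download completion at client `i`). -/
def jDC (z : StSeq n) (i : Fin n) : StSeq n :=
  ⟨z.q, Function.update z.d i (z.d i - 1), Function.update z.c i (z.c i + 1), z.u⟩

/-- Jump `z - e^c_i + e^u_i` (computation completion at client `i`). -/
def jCU (z : StSeq n) (i : Fin n) : StSeq n :=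
  ⟨z.q, z.d, Function.update z.c i (z.c i - 1), Function.update z.u i (z.u i + 1)⟩

/-- Jump `z^{+i} - e^u_i` (upload completion at client `i`: the task joins the end of
the central-server queue). -/
def jApp (z : StSeq n) (i : Fin n) : StSeq n :=
  ⟨z.q ++ [i], z.d, z.c, Function.update z.u i (z.u i - 1)⟩

/-- Jump `z_{-head} + e^d_j` (central-server service completion: the head of the queue
leaves and a new task is routed to client `j`). -/
def jCS (z : StSeq n) (j : Fin n) : StSeq n :=
  ⟨z.q.tail, Function.update z.d j (z.d j + 1), z.c, z.u⟩

/-- Transition rates of the sequence-level generator. -/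
noncomputable def rate (p μc μd μu : Fin n → ℝ) (μCS : ℝ) (z y : StSeq n) : ℝ :=
  (∑ i, if y = jDC z i then μd i * (z.d i : ℝ) else 0) +
  (∑ i, if y = jCU z i then (if 0 < z.c i then μc i else 0) else 0) +
  (∑ i, if y = jApp z i then μu i * (z.u i : ℝ) else 0) +
  ∑ j, if y = jCS z j ∧ z.q ≠ [] then μCS * p j else 0

end StSeq

/-!
Balance holds station by station. Each jump changes `ζ̄` by an explicit factor, for instance
`ζ̄(z - e^d_i + e^c_i) μ^c_i = ζ̄(z) μ^d_i z^d_i`, and reaching `z` by a given kind of jump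
determines the previous state (for a central-server completion, up to the class of the departing
head). Hence the flux into `z` through download completions equals `ζ̄(z)` times the rate of
computation completions out of `z`; likewise computation completions in match uploads out,
uploads in (the class joining the queue is the last one of `q`) match central-server completions
out, and central-server completions in, summed over the head class with `Σ p_i = 1`, match
download completions out. The state space `S_m` is finite, so all series are finite sums.
-/

open Finset Function

section BigOperators

variable {ι M : Type*} [Fintype ι] [CommMonoid M]

@[to_additive]
theorem prod_mul_eq_prod_mul_of_eq_off {f g : ι → M} {i : ι} {x y : M}
    (hoff : ∀ k ≠ i, f k = g k) (hi : f i * x = g i * y) :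
    (∏ k, f k) * x = (∏ k, g k) * y := by
  classical
  rw [← mul_prod_erase _ f (mem_univ i), ← mul_prod_erase _ g (mem_univ i),
    prod_congr rfl fun k hk => hoff k (ne_of_mem_erase hk), mul_right_comm, hi, mul_right_comm]

end BigOperators

section Indicators

variable {α ι M : Type*} [AddCommMonoid M]

theorem sum_ite_eq_of_iff {s : Finset α} {P : α → Prop} [DecidablePred P] {Q : Prop} [Decidable Q]
    {a : α} (hP : ∀ x, P x ↔ x = a ∧ Q) (hs : ∀ x, P x → x ∈ s) (c : M) :
    ∑ x ∈ s, (if P x then c else 0) = if Q then c else 0 := by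
  by_cases hQ : Q
  · have hPa : P a := (hP a).2 ⟨rfl, hQ⟩
    rw [sum_eq_single_of_mem a (hs a hPa) fun x _ hx => if_neg fun h => hx ((hP x).1 h).1,
      if_pos hPa, if_pos hQ]
  · rw [if_neg hQ]
    exact sum_eq_zero fun x _ => if_neg fun h => hQ ((hP x).1 h).2

theorem sum_ite_eq_of_ne_zero [DecidableEq α] {s : Finset α} {a : α} {c : M}
    (hs : c ≠ 0 → a ∈ s) : ∑ x ∈ s, (if x = a then c else 0) = c := by
  rw [sum_ite_eq']
  split_ifs with ha
  · rfl
  · exact (not_imp_comm.1 hs ha).symm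

theorem sum_ite_eq_some [Fintype ι] [DecidableEq ι] (o : Option ι) (c : M) :
    ∑ i, (if o = some i then c else 0) = if o.isSome then c else 0 := by
  cases o <;> simp

end Indicators

namespace StSeq

variable {n : ℕ}

theorem finite_setOf_totalSeq_eq (m : ℕ) : {y : StSeq n | totalSeq y = m}.Finite := by
  let e : StSeq n → List (Fin n) × (Fin n → ℕ) × (Fin n → ℕ) × (Fin n → ℕ) :=
    fun y => (y.q, y.d, y.c, y.u)
  have he : Injective e := fun ⟨_, _, _, _⟩ ⟨_, _, _, _⟩ h => by simp_all [e]
  let box : Set (Fin n → ℕ) := Set.Iic fun _ => m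
  have hbox : ({l : List (Fin n) | l.length ≤ m} ×ˢ box ×ˢ box ×ˢ box).Finite :=
    (List.finite_length_le _ m).prod <| (Set.finite_Iic _).prod <|
      (Set.finite_Iic _).prod (Set.finite_Iic _)
  refine (hbox.preimage he.injOn).subset fun y hy => ?_
  rw [Set.mem_ofPred_eq, totalSeq] at hy
  have hle : ∀ k, y.d k + y.c k + y.u k ≤ m := fun k => by
    have := single_le_sum (f := fun k => y.d k + y.c k + y.u k) (fun _ _ => Nat.zero_le _)
      (mem_univ k)
    omega
  simp only [Set.mem_preimage, Set.mem_prod, Set.mem_ofPred_eq, Set.mem_Iic, Pi.le_def, e, box]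
  refine ⟨by omega, fun k => ?_, fun k => ?_, fun k => ?_⟩ <;> linarith [hle k]

noncomputable def stateSpace (n m : ℕ) : Finset (StSeq n) := (finite_setOf_totalSeq_eq m).toFinset

@[simp]
theorem mem_stateSpace {m : ℕ} {y : StSeq n} : y ∈ stateSpace n m ↔ totalSeq y = m :=
  Set.Finite.mem_toFinset _

theorem tsum_ite_totalSeq_eq_sum (m : ℕ) (f : StSeq n → ℝ) :
    ∑' y, (if totalSeq y = m then f y else 0) = ∑ y ∈ stateSpace n m, f y := by
  rw [tsum_eq_sum fun y hy => if_neg (mt mem_stateSpace.2 hy)]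
  exact sum_congr rfl fun y hy => if_pos (mem_stateSpace.1 hy)

theorem totalSeq_jDC {z : StSeq n} {i : Fin n} (h : 0 < z.d i) :
    totalSeq (jDC z i) = totalSeq z := by
  have := sum_add_eq_sum_add_of_eq_off (i := i) (x := 0) (y := 0)
    (f := fun k => (jDC z i).d k + (jDC z i).c k + (jDC z i).u k)
    (g := fun k => z.d k + z.c k + z.u k) (fun k hk => by simp [jDC, hk]) (by simp [jDC]; omega)
  simpa [totalSeq, jDC] using this

theorem totalSeq_jCU {z : StSeq n} {i : Fin n} (h : 0 < z.c i) :
    totalSeq (jCU z i) = totalSeq z := by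
  have := sum_add_eq_sum_add_of_eq_off (i := i) (x := 0) (y := 0)
    (f := fun k => (jCU z i).d k + (jCU z i).c k + (jCU z i).u k)
    (g := fun k => z.d k + z.c k + z.u k) (fun k hk => by simp [jCU, hk]) (by simp [jCU]; omega)
  simpa [totalSeq, jCU] using this

theorem totalSeq_jApp {z : StSeq n} {i : Fin n} (h : 0 < z.u i) :
    totalSeq (jApp z i) = totalSeq z := by
  have := sum_add_eq_sum_add_of_eq_off (i := i) (x := 1) (y := 0)
    (f := fun k => (jApp z i).d k + (jApp z i).c k + (jApp z i).u k)
    (g := fun k => z.d k + z.c k + z.u k) (fun k hk => by simp [jApp, hk]) (by simp [jApp]; omega)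
  simp only [totalSeq, jApp, List.length_append, List.length_singleton] at this ⊢
  omega

theorem totalSeq_jCS {z : StSeq n} {j : Fin n} (h : z.q ≠ []) :
    totalSeq (jCS z j) = totalSeq z := by
  have := sum_add_eq_sum_add_of_eq_off (i := j) (x := 0) (y := 1)
    (f := fun k => (jCS z j).d k + (jCS z j).c k + (jCS z j).u k)
    (g := fun k => z.d k + z.c k + z.u k) (fun k hk => by simp [jCS, hk]) (by simp [jCS]; omega)
  have hlen := List.length_pos_iff.2 h
  simp only [totalSeq, jCS, List.length_tail] at this ⊢
  omega

/- The predecessors of `z` along each kind of jump; `preCS z i j` is the one whose departing head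
had class `i`. Their truncated subtractions only matter when no such predecessor exists, and the
characterisations below exclude exactly those cases. -/
def preDC (z : StSeq n) (i : Fin n) : StSeq n :=
  ⟨z.q, update z.d i (z.d i + 1), update z.c i (z.c i - 1), z.u⟩

def preCU (z : StSeq n) (i : Fin n) : StSeq n :=
  ⟨z.q, z.d, update z.c i (z.c i + 1), update z.u i (z.u i - 1)⟩

def preApp (z : StSeq n) (i : Fin n) : StSeq n :=
  ⟨z.q.dropLast, z.d, z.c, update z.u i (z.u i + 1)⟩

def preCS (z : StSeq n) (i j : Fin n) : StSeq n :=
  ⟨i :: z.q, update z.d j (z.d j - 1), z.c, z.u⟩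

theorem eq_jDC_and_pos_iff {y z : StSeq n} {i : Fin n} :
    z = jDC y i ∧ 0 < y.d i ↔ y = preDC z i ∧ 0 < z.c i := by
  constructor <;> rintro ⟨rfl, h⟩ <;> cases ‹StSeq n› <;>
    simp_all [preDC, jDC, Nat.sub_add_cancel h]

theorem eq_jCU_and_pos_iff {y z : StSeq n} {i : Fin n} :
    z = jCU y i ∧ 0 < y.c i ↔ y = preCU z i ∧ 0 < z.u i := by
  constructor <;> rintro ⟨rfl, h⟩ <;> cases ‹StSeq n› <;>
    simp_all [preCU, jCU, Nat.sub_add_cancel h]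

theorem eq_jApp_and_pos_iff {y z : StSeq n} {i : Fin n} :
    z = jApp y i ∧ 0 < y.u i ↔ y = preApp z i ∧ z.q.getLast? = some i := by
  constructor <;> rintro ⟨rfl, h⟩ <;> cases ‹StSeq n›
  · simp_all [preApp, jApp, Nat.sub_add_cancel h]
  · simp_all [preApp, jApp, List.dropLast_append_getLast? i h]

theorem eq_jCS_and_head?_eq_iff {y z : StSeq n} {i j : Fin n} :
    z = jCS y j ∧ y.q.head? = some i ↔ y = preCS z i j ∧ 0 < z.d j := by
  constructor <;> rintro ⟨rfl, h⟩ <;> cases ‹StSeq n›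
  · obtain ⟨t, rfl⟩ := List.head?_eq_some_iff.1 h
    simp [preCS, jCS]
  · simp_all [preCS, jCS, Nat.sub_add_cancel h]

section Balance

variable {m : ℕ} {p μc μd μu : Fin n → ℝ} {μCS : ℝ} {z : StSeq n}

theorem zbar_jDC_mul {y : StSeq n} {i : Fin n} (h : 0 < y.d i) (hc : μc i ≠ 0) (hd : μd i ≠ 0) :
    zbar p μc μd μu μCS (jDC y i) * μc i = zbar p μc μd μu μCS y * (μd i * y.d i) := by
  obtain ⟨k, hk⟩ : ∃ k, y.d i = k + 1 := ⟨y.d i - 1, by omega⟩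
  refine prod_mul_eq_prod_mul_of_eq_off (i := i) (fun l hl => by simp [jDC, hl]) ?_
  simp only [jDC, update_self, hk, Nat.add_sub_cancel, Nat.factorial_succ, pow_succ]
  push_cast
  field_simp

theorem zbar_jCU_mul {y : StSeq n} {i : Fin n} (h : 0 < y.c i) (hc : μc i ≠ 0) (hu : μu i ≠ 0) :
    zbar p μc μd μu μCS (jCU y i) * (μu i * (y.u i + 1)) = zbar p μc μd μu μCS y * μc i := by
  obtain ⟨k, hk⟩ : ∃ k, y.c i = k + 1 := ⟨y.c i - 1, by omega⟩
  refine prod_mul_eq_prod_mul_of_eq_off (i := i) (fun l hl => by simp [jCU, hl]) ?_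
  simp only [jCU, update_self, hk, Nat.add_sub_cancel, Nat.factorial_succ, pow_succ]
  push_cast
  field_simp

theorem zbar_jApp_mul {y : StSeq n} {i : Fin n} (h : 0 < y.u i) (hu : μu i ≠ 0) (hCS : μCS ≠ 0) :
    zbar p μc μd μu μCS (jApp y i) * μCS = zbar p μc μd μu μCS y * (μu i * y.u i) := by
  obtain ⟨k, hk⟩ : ∃ k, y.u i = k + 1 := ⟨y.u i - 1, by omega⟩
  refine prod_mul_eq_prod_mul_of_eq_off (i := i) (fun l hl => by simp [jApp, hl, Ne.symm hl]) ?_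
  simp only [jApp, update_self, hk, Nat.add_sub_cancel, Nat.factorial_succ, pow_succ,
    List.count_append, List.count_singleton_self]
  push_cast
  field_simp

theorem zbar_cons_mul (t : List (Fin n)) (d c u : Fin n → ℕ) (i : Fin n) (hCS : μCS ≠ 0) :
    zbar p μc μd μu μCS ⟨t, d, c, u⟩ * p i = zbar p μc μd μu μCS ⟨i :: t, d, c, u⟩ * μCS := by
  refine prod_mul_eq_prod_mul_of_eq_off (i := i) (fun l hl => by simp [Ne.symm hl]) ?_
  simp only [List.count_cons_self, pow_succ]
  field_simp

theorem zbar_update_d_succ_mul (q : List (Fin n)) (d c u : Fin n → ℕ) (j : Fin n)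
    (hd : μd j ≠ 0) :
    zbar p μc μd μu μCS ⟨q, update d j (d j + 1), c, u⟩ * (μd j * (d j + 1)) =
      zbar p μc μd μu μCS ⟨q, d, c, u⟩ * p j := by
  refine prod_mul_eq_prod_mul_of_eq_off (i := j) (fun l hl => by simp [hl]) ?_
  simp only [update_self, Nat.factorial_succ, pow_succ]
  push_cast
  field_simp

theorem zbar_jCS_mul {y : StSeq n} {i j : Fin n} (h : y.q.head? = some i) (hd : μd j ≠ 0)
    (hCS : μCS ≠ 0) :
    zbar p μc μd μu μCS (jCS y j) * (p i * (μd j * (y.d j + 1))) =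
      zbar p μc μd μu μCS y * (μCS * p j) := by
  obtain ⟨q, d, c, u⟩ := y
  obtain ⟨t, rfl⟩ : ∃ t, q = i :: t := List.head?_eq_some_iff.1 h
  have hhead := zbar_cons_mul (p := p) (μc := μc) (μd := μd) (μu := μu) t d c u i hCS
  have hdown := zbar_update_d_succ_mul (p := p) (μc := μc) (μu := μu) (μCS := μCS) t d c u j hd
  simp only [jCS, List.tail_cons]
  linear_combination p i * hdown + p j * hhead

theorem sum_stateSpace_rate (hz : totalSeq z = m) (hpsum : ∑ i, p i = 1) :
    ∑ y ∈ stateSpace n m, rate p μc μd μu μCS z y =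
      ∑ i, μd i * z.d i + ∑ i, (if 0 < z.c i then μc i else 0) + ∑ i, μu i * z.u i +
        if z.q ≠ [] then μCS else 0 := by
  have mem {y : StSeq n} (h : totalSeq y = totalSeq z) : y ∈ stateSpace n m :=
    mem_stateSpace.2 (h.trans hz)
  have pos {k : ℕ} {r : ℝ} (hr : r * k ≠ 0) : 0 < k :=
    Nat.pos_of_ne_zero fun h => hr (by simp [h])
  have hDC (i : Fin n) :
      ∑ y ∈ stateSpace n m, (if y = jDC z i then μd i * (z.d i : ℝ) else 0) = μd i * z.d i :=
    sum_ite_eq_of_ne_zero fun hr => mem (totalSeq_jDC (pos hr))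
  have hCU (i : Fin n) : ∑ y ∈ stateSpace n m,
      (if y = jCU z i then (if 0 < z.c i then μc i else 0) else 0) =
        if 0 < z.c i then μc i else 0 :=
    sum_ite_eq_of_ne_zero fun hr => mem (totalSeq_jCU (by_contra fun h => hr (if_neg h)))
  have hApp (i : Fin n) :
      ∑ y ∈ stateSpace n m, (if y = jApp z i then μu i * (z.u i : ℝ) else 0) = μu i * z.u i :=
    sum_ite_eq_of_ne_zero fun hr => mem (totalSeq_jApp (pos hr))
  have hCS (j : Fin n) : ∑ y ∈ stateSpace n m,
      (if y = jCS z j then (if z.q ≠ [] then μCS * p j else 0) else 0) =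
        if z.q ≠ [] then μCS * p j else 0 :=
    sum_ite_eq_of_ne_zero fun hr => mem (totalSeq_jCS (by_contra fun h => hr (if_neg h)))
  have hp : ∑ j, (if z.q ≠ [] then μCS * p j else 0) = if z.q ≠ [] then μCS else 0 := by
    split_ifs <;> simp [← mul_sum, hpsum]
  simp only [rate, sum_add_distrib, ite_and, sum_comm (s := stateSpace n m), hDC, hCU, hApp, hCS,
    hp]

theorem sum_stateSpace_ite_eq_of_iff (hz : totalSeq z = m) {J : StSeq n → StSeq n}
    {A : StSeq n → Prop} [DecidablePred A] {Q : Prop} [Decidable Q] {y₀ : StSeq n}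
    (hJ : ∀ y, z = J y ∧ A y ↔ y = y₀ ∧ Q) (htot : ∀ y, A y → totalSeq (J y) = totalSeq y)
    {f : StSeq n → ℝ} {c : ℝ} (hf : ∀ y, z = J y → A y → f y = c)
    (hf₀ : ∀ y, z = J y → ¬A y → f y = 0) :
    ∑ y ∈ stateSpace n m, (if z = J y then f y else 0) = if Q then c else 0 := by
  rw [← sum_ite_eq_of_iff (s := stateSpace n m) hJ
    (fun y hy => mem_stateSpace.2 (by rw [← hz, hy.1, htot y hy.2])) c]
  refine sum_congr rfl fun y _ => ?_
  by_cases hzy : z = J y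
  · by_cases hA : A y
    · rw [if_pos hzy, if_pos ⟨hzy, hA⟩, hf y hzy hA]
    · rw [if_pos hzy, if_neg fun h => hA h.2, hf₀ y hzy hA]
  · rw [if_neg hzy, if_neg fun h => hzy h.1]

theorem sum_inflow_jDC (hz : totalSeq z = m) {i : Fin n} (hc : μc i ≠ 0) (hd : μd i ≠ 0) :
    ∑ y ∈ stateSpace n m,
      (if z = jDC y i then zbar p μc μd μu μCS y * (μd i * y.d i) else 0) =
        if 0 < z.c i then zbar p μc μd μu μCS z * μc i else 0 :=
  sum_stateSpace_ite_eq_of_iff hz (fun _ => eq_jDC_and_pos_iff) (fun _ => totalSeq_jDC)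
    (fun y hzy hA => by rw [hzy, zbar_jDC_mul hA hc hd])
    (fun y _ hA => by simp [Nat.eq_zero_of_not_pos hA])

theorem sum_inflow_jCU (hz : totalSeq z = m) {i : Fin n} (hc : μc i ≠ 0) (hu : μu i ≠ 0) :
    ∑ y ∈ stateSpace n m,
      (if z = jCU y i then (if 0 < y.c i then zbar p μc μd μu μCS y * μc i else 0) else 0) =
        zbar p μc μd μu μCS z * (μu i * z.u i) := by
  rw [sum_stateSpace_ite_eq_of_iff (c := zbar p μc μd μu μCS z * (μu i * z.u i)) hz
    (fun _ => eq_jCU_and_pos_iff) (fun _ => totalSeq_jCU)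
    (fun y hzy hA => by rw [if_pos hA, hzy, ← zbar_jCU_mul hA hc hu]; simp [jCU])
    (fun y _ hA => if_neg hA)]
  split_ifs with h
  · rfl
  · simp [Nat.eq_zero_of_not_pos h]

theorem sum_inflow_jApp (hz : totalSeq z = m) {i : Fin n} (hu : μu i ≠ 0) (hCS : μCS ≠ 0) :
    ∑ y ∈ stateSpace n m,
      (if z = jApp y i then zbar p μc μd μu μCS y * (μu i * y.u i) else 0) =
        if z.q.getLast? = some i then zbar p μc μd μu μCS z * μCS else 0 :=
  sum_stateSpace_ite_eq_of_iff hz (fun _ => eq_jApp_and_pos_iff) (fun _ => totalSeq_jApp)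
    (fun y hzy hA => by rw [hzy, zbar_jApp_mul hA hu hCS])
    (fun y _ hA => by simp [Nat.eq_zero_of_not_pos hA])

-- A central-server completion into `z` has one predecessor per class of the departing head.
theorem ite_jCS_eq_sum_head (y : StSeq n) (j : Fin n) (hd : μd j ≠ 0) (hCS : μCS ≠ 0) :
    (if z = jCS y j ∧ y.q ≠ [] then zbar p μc μd μu μCS y * (μCS * p j) else 0) =
      ∑ i, if z = jCS y j ∧ y.q.head? = some i then
        zbar p μc μd μu μCS z * (p i * (μd j * z.d j)) else 0 := by
  rcases hq : y.q with _ | ⟨a, t⟩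
  · simp
  by_cases hzy : z = jCS y j
  · have hd' : z.d j = y.d j + 1 := by simp [hzy, jCS]
    simp only [hzy, true_and, ne_eq, reduceCtorEq, not_false_eq_true, if_true,
      List.head?_cons, Option.some.injEq, sum_ite_eq, mem_univ]
    rw [← zbar_jCS_mul (List.head?_eq_some_iff.2 ⟨t, hq⟩) hd hCS, ← hzy, hd']
    push_cast
    rfl
  · simp [hzy]

theorem sum_inflow_jCS (hz : totalSeq z = m) (hpsum : ∑ i, p i = 1) {j : Fin n} (hd : μd j ≠ 0)
    (hCS : μCS ≠ 0) :
    ∑ y ∈ stateSpace n m,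
      (if z = jCS y j ∧ y.q ≠ [] then zbar p μc μd μu μCS y * (μCS * p j) else 0) =
        zbar p μc μd μu μCS z * (μd j * z.d j) := by
  have mem (i : Fin n) (y : StSeq n) (hy : z = jCS y j ∧ y.q.head? = some i) :
      y ∈ stateSpace n m := by
    refine mem_stateSpace.2 ?_
    rw [← hz, hy.1, totalSeq_jCS fun h => by simp [h] at hy]
  rw [sum_congr rfl fun y _ => ite_jCS_eq_sum_head y j hd hCS, sum_comm,
    sum_congr rfl fun i _ => sum_ite_eq_of_iff (fun y => eq_jCS_and_head?_eq_iff) (mem i) _]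
  rcases Nat.eq_zero_or_pos (z.d j) with h | h
  · simp [h]
  · simp only [if_pos h, ← sum_mul, ← mul_sum, hpsum]
    ring

theorem sum_stateSpace_zbar_mul_rate (hz : totalSeq z = m) (hpsum : ∑ i, p i = 1)
    (hc : ∀ i, μc i ≠ 0) (hd : ∀ i, μd i ≠ 0) (hu : ∀ i, μu i ≠ 0) (hCS : μCS ≠ 0) :
    ∑ y ∈ stateSpace n m, zbar p μc μd μu μCS y * rate p μc μd μu μCS y z =
      zbar p μc μd μu μCS z * (∑ i, (if 0 < z.c i then μc i else 0) + ∑ i, μu i * z.u i +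
        (if z.q ≠ [] then μCS else 0) + ∑ j, μd j * z.d j) := by
  have hApp : ∑ i, (if z.q.getLast? = some i then zbar p μc μd μu μCS z * μCS else 0) =
      if z.q ≠ [] then zbar p μc μd μu μCS z * μCS else 0 := by
    rw [sum_ite_eq_some]
    simp
  simp only [rate, mul_add, mul_sum, mul_ite, mul_zero, sum_add_distrib,
    sum_comm (s := stateSpace n m), sum_inflow_jDC hz (hc _) (hd _),
    sum_inflow_jCU hz (hc _) (hu _), sum_inflow_jApp hz (hu _) hCS,
    sum_inflow_jCS hz hpsum (hd _) hCS, hApp]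

end Balance

end StSeq

open StSeq

theorem stmt17_general (n m : ℕ)
    (p μc μd μu : Fin n → ℝ) (μCS : ℝ)
    (hpsum : ∑ i, p i = 1)
    (hμc : ∀ i, 0 < μc i) (hμd : ∀ i, 0 < μd i) (hμu : ∀ i, 0 < μu i) (hμCS : 0 < μCS)
    (z : StSeq n) (hz : totalSeq z = m) :
    (∑' y : StSeq n,
        if totalSeq y = m then zbar p μc μd μu μCS y * rate p μc μd μu μCS y z else 0) =
      zbar p μc μd μu μCS z *
        ∑' y : StSeq n, if totalSeq y = m then rate p μc μd μu μCS z y else 0 := by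
  rw [tsum_ite_totalSeq_eq_sum, tsum_ite_totalSeq_eq_sum, sum_stateSpace_rate hz hpsum,
    sum_stateSpace_zbar_mul_rate hz hpsum (fun i => (hμc i).ne') (fun i => (hμd i).ne')
      (fun i => (hμu i).ne') hμCS.ne']
  ring

/-- The unnormalized weight `ζ̄` satisfies the global balance equations of the
sequence-level generator on the state space `S_m`:
`Σ_{y ∈ S_m} ζ̄(y) r(y,z) = ζ̄(z) Σ_{y ∈ S_m} r(z,y)` for every `z ∈ S_m`. -/
theorem stmt17 (n m : ℕ) (hn : 1 ≤ n) (hm : 1 ≤ m)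
    (p μc μd μu : Fin n → ℝ) (μCS : ℝ)
    (hp : ∀ i, 0 < p i) (hpsum : ∑ i, p i = 1)
    (hμc : ∀ i, 0 < μc i) (hμd : ∀ i, 0 < μd i) (hμu : ∀ i, 0 < μu i) (hμCS : 0 < μCS)
    (z : StSeq n) (hz : totalSeq z = m) :
    (∑' y : StSeq n,
        if totalSeq y = m then zbar p μc μd μu μCS y * rate p μc μd μu μCS y z else 0) =
      zbar p μc μd μu μCS z *
        ∑' y : StSeq n, if totalSeq y = m then rate p μc μd μu μCS z y else 0 :=
  stmt17_general n m p μc μd μu μCS hpsum hμc hμd hμu hμCS z hz
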